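/- arXiv:1404.1773 — 4 statements merged into one kernel-verified Lean document; each statement's English description precedes it below -/
import Mathlib

section
/- Fix t > 0, ε > 0, β, ρ ∈ ℝ, let δ = -|β| - |ρ|/t + √((|β| + |ρ|/t)² + 2ε/t), and let ν be a Borel measure on ℝ concentrated on (0,∞) with ∫ min(x,1) ν(dx) < ∞ and ∫_{x>1} e^{rx} ν(dx) < ∞ for all r < ε. Then for every u ∈ ℂ with |Re u| < δ, every A < 0 and every s ∈ [0, t], the integral ∫_{(0,∞)} |e^{u·f_u(A,s)·x} - 1| ν(dx) is finite; in particular ∫_{x>1} e^{Re(u·f_u(A,s))·x} ν(dx) < ∞. -/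
/-! Since `0 ≤ (e^{Aτ} - 1)/A ≤ τ ≤ t`, the real part of `c = u·f_u(A,s)` is at most
`t(|β|r + r²/2) + |ρ|r` with `r = |Re u|`, and `r < δ` is exactly the condition making this
quadratic bound smaller than `ε`. Then `|e^{cx} - 1|` is `O(x)` near `0` and `O(e^{(Re c)x} + 1)`
at infinity, both integrable against `ν`. -/

open MeasureTheory

/-- `u·f_u(A,s) = ((e^{A(t-s)} - 1)/A)(uβ + u²/2) + ρu` for complex `u`. -/
noncomputable def ufc (t β ρ : ℝ) (u : ℂ) (A s : ℝ) : ℂ :=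
  (((Real.exp (A * (t - s)) - 1) / A : ℝ) : ℂ) * (u * (β : ℂ) + u ^ 2 / 2) + (ρ : ℂ) * u

lemma norm_cexp_mul_ofReal_sub_one_le (c : ℂ) {x : ℝ} (hx : x ∈ Set.Icc (0 : ℝ) 1) :
    ‖Complex.exp (c * x) - 1‖ ≤ ‖c‖ * Real.exp ‖c‖ * x := by
  have hcx : ‖c * x‖ = ‖c‖ * x := by rw [norm_mul, Complex.norm_of_nonneg hx.1]
  have hcx0 : 0 ≤ ‖c‖ * x := mul_nonneg (norm_nonneg c) hx.1
  have hle : ‖c‖ * x ≤ ‖c‖ := mul_le_of_le_one_right (norm_nonneg c) hx.2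
  calc ‖Complex.exp (c * x) - 1‖ ≤ ‖c * x‖ * Real.exp ‖c * x‖ := by
        simpa using Complex.norm_exp_sub_sum_le_norm_mul_exp (c * x) 1
    _ ≤ ‖c‖ * x * Real.exp ‖c‖ := by
        rw [hcx]; gcongr
    _ = ‖c‖ * Real.exp ‖c‖ * x := by ring

lemma norm_cexp_mul_ofReal_sub_one_le_exp_add_one (c : ℂ) (x : ℝ) :
    ‖Complex.exp (c * x) - 1‖ ≤ Real.exp (c.re * x) + 1 := by
  have hre : (c * x).re = c.re * x := by simp
  simpa [Complex.norm_exp, hre] using norm_sub_le (Complex.exp (c * x)) 1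

lemma integrableOn_norm_cexp_mul_ofReal_sub_one {ν : Measure ℝ} {c : ℂ}
    (hmin : Integrable (fun x : ℝ => min x 1) ν)
    (hexp : IntegrableOn (fun x : ℝ => Real.exp (c.re * x)) {x | 1 < x} ν) :
    IntegrableOn (fun x : ℝ => ‖Complex.exp (c * x) - 1‖) (Set.Ioi 0) ν := by
  have hmeas : AEStronglyMeasurable (fun x : ℝ => ‖Complex.exp (c * x) - 1‖) ν := by
    fun_prop
  have hnear : IntegrableOn (fun x : ℝ => ‖Complex.exp (c * x) - 1‖) (Set.Ioc 0 1) ν := by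
    refine Integrable.mono' ((hmin.const_mul (‖c‖ * Real.exp ‖c‖)).restrict)
      hmeas.restrict ((ae_restrict_iff' measurableSet_Ioc).2 (.of_forall fun x hx => ?_))
    rw [norm_norm, min_eq_left hx.2]
    exact norm_cexp_mul_ofReal_sub_one_le c (Set.Ioc_subset_Icc_self hx)
  have hone : IntegrableOn (fun _ : ℝ => (1 : ℝ)) (Set.Ioi 1) ν :=
    hmin.integrableOn.congr_fun (fun x hx => min_eq_right (le_of_lt hx)) measurableSet_Ioi
  have hfar : IntegrableOn (fun x : ℝ => ‖Complex.exp (c * x) - 1‖) (Set.Ioi 1) ν :=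
    Integrable.mono' (IntegrableOn.add hexp hone) hmeas.restrict
      (.of_forall fun x => by
        simpa using norm_cexp_mul_ofReal_sub_one_le_exp_add_one c x)
  simpa [Set.Ioc_union_Ioi_eq_Ioi zero_le_one] using hnear.union hfar

lemma exp_mul_sub_one_div_mem_Icc {A τ : ℝ} (hA : A < 0) (hτ : 0 ≤ τ) :
    (Real.exp (A * τ) - 1) / A ∈ Set.Icc 0 τ := by
  have hAτ : A * τ ≤ 0 := mul_nonpos_of_nonpos_of_nonneg hA.le hτ
  constructor
  · exact div_nonneg_of_nonpos (by linarith [Real.exp_le_one_iff.2 hAτ]) hA.le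
  · rw [div_le_iff_of_neg hA]
    linarith [Real.add_one_le_exp (A * τ)]

lemma ufc_re (t β ρ : ℝ) (u : ℂ) (A s : ℝ) :
    (ufc t β ρ u A s).re = (Real.exp (A * (t - s)) - 1) / A *
      (u.re * β + (u.re ^ 2 - u.im ^ 2) / 2) + ρ * u.re := by
  simp only [ufc, Complex.add_re, Complex.mul_re, Complex.ofReal_re,
    Complex.ofReal_im, Complex.div_ofNat_re, sq]
  ring

lemma ufc_re_le {t β ρ A s : ℝ} (u : ℂ) (hA : A < 0) (hs : s ∈ Set.Icc 0 t) :
    (ufc t β ρ u A s).re ≤ t * (|β| * |u.re| + |u.re| ^ 2 / 2) + |ρ| * |u.re| := by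
  obtain ⟨ha0, hat⟩ := exp_mul_sub_one_div_mem_Icc hA (sub_nonneg.2 hs.2)
  have hquad : u.re * β + (u.re ^ 2 - u.im ^ 2) / 2 ≤ |β| * |u.re| + |u.re| ^ 2 / 2 := by
    nlinarith [le_abs_self (u.re * β), abs_mul u.re β, sq_abs u.re, sq_nonneg u.im]
  have hlin : ρ * u.re ≤ |ρ| * |u.re| := abs_mul ρ u.re ▸ le_abs_self _
  rw [ufc_re]
  calc _ ≤ (Real.exp (A * (t - s)) - 1) / A * (|β| * |u.re| + |u.re| ^ 2 / 2)
          + |ρ| * |u.re| := by gcongr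
    _ ≤ t * (|β| * |u.re| + |u.re| ^ 2 / 2) + |ρ| * |u.re| := by
        gcongr
        linarith [hs.1]

lemma mul_add_lt_of_lt_neg_add_sqrt {t ε b p r : ℝ} (ht : 0 < t) (hb : 0 ≤ b) (hp : 0 ≤ p)
    (hr : 0 ≤ r) (h : r < -b - p / t + Real.sqrt ((b + p / t) ^ 2 + 2 * ε / t)) :
    t * (b * r + r ^ 2 / 2) + p * r < ε := by
  have hsq : (r + (b + p / t)) ^ 2 < (b + p / t) ^ 2 + 2 * ε / t :=
    (Real.lt_sqrt (by positivity)).1 (by linarith)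
  have hscaled : (r ^ 2 + 2 * (b + p / t) * r) * t < 2 * ε := by
    rw [← lt_div_iff₀ ht]; nlinarith
  have hexpand : (r ^ 2 + 2 * (b + p / t) * r) * t = 2 * (t * (b * r + r ^ 2 / 2) + p * r) := by
    field_simp
    ring
  linarith

theorem stmt_6_general (t ε β ρ : ℝ) (ht : 0 < t)
    (ν : Measure ℝ)
    (hmin : Integrable (fun x : ℝ => min x 1) ν)
    (hexp : ∀ r : ℝ, r < ε → IntegrableOn (fun x : ℝ => Real.exp (r * x)) {x | 1 < x} ν) :
    ∀ u : ℂ, |u.re| < -|β| - |ρ| / t + Real.sqrt ((|β| + |ρ| / t) ^ 2 + 2 * ε / t) →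
      ∀ A : ℝ, A < 0 → ∀ s ∈ Set.Icc (0 : ℝ) t,
        IntegrableOn (fun x : ℝ => ‖Complex.exp (ufc t β ρ u A s * (x : ℂ)) - 1‖)
          (Set.Ioi 0) ν ∧
        IntegrableOn (fun x : ℝ => Real.exp ((ufc t β ρ u A s).re * x)) {x | 1 < x} ν := by
  intro u hu A hA s hs
  have hre : (ufc t β ρ u A s).re < ε := (ufc_re_le u hA hs).trans_lt
    (mul_add_lt_of_lt_neg_add_sqrt ht (abs_nonneg β) (abs_nonneg ρ) (abs_nonneg _) hu)
  exact ⟨integrableOn_norm_cexp_mul_ofReal_sub_one hmin (hexp _ hre), hexp _ hre⟩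

theorem stmt_6 (t ε β ρ : ℝ) (ht : 0 < t) (hε : 0 < ε)
    (ν : Measure ℝ) (hν : ν (Set.Ioi (0 : ℝ))ᶜ = 0)
    (hmin : Integrable (fun x : ℝ => min x 1) ν)
    (hexp : ∀ r : ℝ, r < ε → IntegrableOn (fun x : ℝ => Real.exp (r * x)) {x | 1 < x} ν) :
    ∀ u : ℂ, |u.re| < -|β| - |ρ| / t + Real.sqrt ((|β| + |ρ| / t) ^ 2 + 2 * ε / t) →
      ∀ A : ℝ, A < 0 → ∀ s ∈ Set.Icc (0 : ℝ) t,
        IntegrableOn (fun x : ℝ => ‖Complex.exp (ufc t β ρ u A s * (x : ℂ)) - 1‖)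
          (Set.Ioi 0) ν ∧
        IntegrableOn (fun x : ℝ => Real.exp ((ufc t β ρ u A s).re * x)) {x | 1 < x} ν :=
  stmt_6_general t ε β ρ ht ν hmin hexp
end

section
/- Let ν be a Borel measure on ℝ concentrated on (0,∞) with ∫ min(x,1) ν(dx) < ∞ and ∫_{x>1} ln(x) ν(dx) < ∞, and let π be a Borel probability measure on ℝ concentrated on (-∞,0) with ∫_{(-∞,0)} (1/(-A)) π(dA) < ∞. Then the iterated integral ∫_{(-∞,0)} ∫₀^∞ ∫_{(0,∞)} min(e^{As}·x, 1) ν(dx) ds π(dA) is finite. (This says that the measure ν_Σ defined by ν_Σ(B) = ∫_{(-∞,0)} ∫₀^∞ ∫_{(0,∞)} 1_B(e^{As}x) ν(dx) ds π(dA) satisfies the Lévy-measure integrability condition ∫ min(y,1) ν_Σ(dy) < ∞.) -/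
/-!
Splitting the time integral at `t = log⁺ x / (-A)`, where `e^{At} x = min x 1`, gives
`∫₀^∞ min (e^{As} x, 1) ds ≤ (log⁺ x + min x 1) / (-A)`: up to time `t` the integrand is at most
`1`, afterwards it is at most `e^{As} x`. After swapping the `s`- and `x`-integrals (Tonelli,
which needs `ν` to be σ-finite on `(0, ∞)`; this follows from the integrability of `min x 1`), the
iterated integral is bounded by `∫ 1/(-A) dπ · ∫ (log⁺ x + min x 1) dν`.
-/

open MeasureTheory Set

theorem MeasureTheory.Integrable.sigmaFinite_restrict_of_ne_zero {α β : Type*}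
    [MeasurableSpace α] [NormedAddCommGroup β] {μ : Measure α} {f : α → β} {s : Set α}
    (hf : Integrable f μ) (hs : ∀ x ∈ s, f x ≠ 0) : SigmaFinite (μ.restrict s) := by
  obtain ⟨t, ht, hft, _⟩ := hf.aefinStronglyMeasurable.exists_set_sigmaFinite
  set N := {x | x ∉ t ∧ f x ≠ 0}
  have hN : μ.restrict N = 0 := by
    rw [Filter.EventuallyEq, ae_restrict_iff' ht.compl, ae_iff] at hft
    exact Measure.restrict_eq_zero.2 (by simpa [N] using hft)
  have : SigmaFinite (μ.restrict N) := by rw [hN]; infer_instance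
  refine Measure.sigmaFinite_of_le (μ.restrict (t ∪ N))
    (Measure.restrict_mono (fun x hx => ?_) le_rfl)
  by_cases hxt : x ∈ t
  exacts [Or.inl hxt, Or.inr ⟨hxt, hs x hx⟩]

section

open Real

theorem lintegral_exp_mul_Ioi {a : ℝ} (ha : a < 0) (c : ℝ) :
    ∫⁻ s in Ioi c, ENNReal.ofReal (exp (a * s)) = ENNReal.ofReal (exp (a * c) / -a) := by
  rw [← ofReal_integral_eq_lintegral_ofReal (integrableOn_exp_mul_Ioi ha c)
    (ae_of_all _ fun _ => (exp_pos _).le), integral_exp_mul_Ioi ha, neg_div, div_neg]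

theorem exp_neg_posLog_mul_self {x : ℝ} (hx : 0 < x) : exp (-log⁺ x) * x = min x 1 := by
  rcases le_total x 1 with h | h
  · rw [(posLog_eq_zero_iff x).2 (by rw [abs_of_pos hx]; exact h), min_eq_left h]
    simp
  · rw [posLog_eq_log (by rw [abs_of_pos hx]; exact h), exp_neg, exp_log hx, min_eq_right h,
      inv_mul_cancel₀ hx.ne']

theorem lintegral_min_exp_mul_one_le {a x : ℝ} (ha : a < 0) (hx : 0 < x) :
    ∫⁻ s in Ioi 0, ENNReal.ofReal (min (exp (a * s) * x) 1)
      ≤ ENNReal.ofReal (1 / -a) * ENNReal.ofReal (log⁺ x + min x 1) := by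
  have hna : 0 < -a := neg_pos.2 ha
  set t := log⁺ x / -a
  have ht : 0 ≤ t := div_nonneg posLog_nonneg hna.le
  have hat : exp (a * t) * x = min x 1 := by
    rw [← exp_neg_posLog_mul_self hx]
    congr 2
    simp only [t]
    field_simp [ha.ne]
  calc ∫⁻ s in Ioi 0, ENNReal.ofReal (min (exp (a * s) * x) 1)
      ≤ (∫⁻ s in Ioc 0 t, ENNReal.ofReal (min (exp (a * s) * x) 1))
        + ∫⁻ s in Ioi t, ENNReal.ofReal (min (exp (a * s) * x) 1) := by
        rw [← Ioc_union_Ioi_eq_Ioi ht]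
        exact lintegral_union_le _ _ _
    _ ≤ (∫⁻ _ in Ioc 0 t, 1)
        + ∫⁻ s in Ioi t, ENNReal.ofReal (exp (a * s)) * ENNReal.ofReal x := by
        gcongr with s s
        · exact ENNReal.ofReal_le_one.2 (min_le_right _ _)
        · rw [← ENNReal.ofReal_mul (exp_pos _).le]
          exact ENNReal.ofReal_le_ofReal (min_le_left _ _)
    _ = ENNReal.ofReal (1 / -a) * ENNReal.ofReal (log⁺ x + min x 1) := by
        rw [setLIntegral_one, volume_Ioc, lintegral_mul_const _ (by fun_prop),
          lintegral_exp_mul_Ioi ha, sub_zero, ← ENNReal.ofReal_mul (by positivity),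
          ← ENNReal.ofReal_add ht (by positivity), ← ENNReal.ofReal_mul (by positivity),
          div_mul_eq_mul_div, hat]
        congr 1
        simp only [t]
        field_simp
        ring

theorem lintegral_lintegral_min_exp_mul_one_le (ν : Measure ℝ) [SFinite (ν.restrict (Ioi 0))]
    {a : ℝ} (ha : a < 0) :
    ∫⁻ s in Ioi 0, ∫⁻ x in Ioi 0, ENNReal.ofReal (min (exp (a * s) * x) 1) ∂ν
      ≤ ENNReal.ofReal (1 / -a) * ∫⁻ x in Ioi 0, ENNReal.ofReal (log⁺ x + min x 1) ∂ν := by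
  rw [lintegral_lintegral_swap (by fun_prop), ← lintegral_const_mul _ (by fun_prop)]
  exact setLIntegral_mono (by fun_prop) fun x hx => lintegral_min_exp_mul_one_le ha hx

theorem integrableOn_posLog_add_min_one {ν : Measure ℝ}
    (hmin : Integrable (fun x : ℝ => min x 1) ν) (hlog : IntegrableOn log (Ioi 1) ν) :
    IntegrableOn (fun x => log⁺ x + min x 1) (Ioi 0) ν := by
  refine IntegrableOn.add ?_ hmin.integrableOn
  rw [← Ioc_union_Ioi_eq_Ioi zero_le_one]
  refine IntegrableOn.union (integrableOn_zero.congr_fun (fun x hx => ?_) measurableSet_Ioc)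
    (hlog.congr_fun (fun x hx => ?_) measurableSet_Ioi)
  · exact ((posLog_eq_zero_iff x).2 (abs_le.2 ⟨by linarith [hx.1], hx.2⟩)).symm
  · exact (posLog_eq_log (le_abs.2 (Or.inl (le_of_lt hx)))).symm

end

theorem stmt_13_general (ν π : Measure ℝ)
    (hmin : Integrable (fun x : ℝ => min x 1) ν)
    (hlog : IntegrableOn (fun x : ℝ => Real.log x) {x | 1 < x} ν)
    (hinv : IntegrableOn (fun A : ℝ => 1 / (-A)) (Set.Iio 0) π) :
    (∫⁻ A in Set.Iio (0 : ℝ), ∫⁻ s in Set.Ioi (0 : ℝ), ∫⁻ x in Set.Ioi (0 : ℝ),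
        ENNReal.ofReal (min (Real.exp (A * s) * x) 1) ∂ν ∂volume ∂π) < ⊤ := by
  have : SigmaFinite (ν.restrict (Ioi 0)) :=
    hmin.sigmaFinite_restrict_of_ne_zero fun x hx => (lt_min hx one_pos).ne'
  have hC := (integrableOn_posLog_add_min_one hmin hlog).lintegral_lt_top
  calc (∫⁻ A in Iio 0, ∫⁻ s in Ioi 0, ∫⁻ x in Ioi 0,
        ENNReal.ofReal (min (Real.exp (A * s) * x) 1) ∂ν ∂volume ∂π)
      ≤ ∫⁻ A in Iio 0, ENNReal.ofReal (1 / -A)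
          * ∫⁻ x in Ioi 0, ENNReal.ofReal (Real.posLog x + min x 1) ∂ν ∂π :=
        setLIntegral_mono (by fun_prop) fun A hA => lintegral_lintegral_min_exp_mul_one_le ν hA
    _ = (∫⁻ A in Iio 0, ENNReal.ofReal (1 / -A) ∂π)
          * ∫⁻ x in Ioi 0, ENNReal.ofReal (Real.posLog x + min x 1) ∂ν :=
        lintegral_mul_const _ (by fun_prop)
    _ < ⊤ := ENNReal.mul_lt_top hinv.lintegral_lt_top hC

theorem stmt_13 (ν π : Measure ℝ) (hν : ν (Set.Ioi (0 : ℝ))ᶜ = 0)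
    (hmin : Integrable (fun x : ℝ => min x 1) ν)
    (hlog : IntegrableOn (fun x : ℝ => Real.log x) {x | 1 < x} ν)
    [IsProbabilityMeasure π] (hπ : π (Set.Iio (0 : ℝ))ᶜ = 0)
    (hinv : IntegrableOn (fun A : ℝ => 1 / (-A)) (Set.Iio 0) π) :
    (∫⁻ A in Set.Iio (0 : ℝ), ∫⁻ s in Set.Ioi (0 : ℝ), ∫⁻ x in Set.Ioi (0 : ℝ),
        ENNReal.ofReal (min (Real.exp (A * s) * x) 1) ∂ν ∂volume ∂π) < ⊤ :=
  stmt_13_general ν π hmin hlog hinv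
end

section
/- Let B < 0, t > 0 and α > 1 with α ≠ 2. Then ∫₀^∞ ((e^{Brt} − 1)/(B²r²)) · (r^{α−1} e^{−r}/Γ(α)) dr = ((1 − Bt)^{2−α} − 1)/(B²(α − 1)(α − 2)). (Equivalently, writing A = Br with r distributed according to the Gamma(α,1) distribution, ∫_{(-∞,0)} ∫₀ᵗ (e^{A(t−s)}/A) ds π(dA) = ((1 − Bt)^{2−α} − 1)/(B²(α − 1)(α − 2)) where π is the law of B·R, R ~ Γ(α,1).) -/
/-!
With `c = -B t > 0` the integrand is `-(1 - e^{-cr}) r^{α-3} e^{-r} / (B² Γ(α))`. Writing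
`(1 - e^{-cr}) / r = ∫₀ᶜ e^{-ur} du` and exchanging the order of integration (the integrand is
nonnegative), the inner integral in `r` is a Gamma integral `Γ(α-1) (1+u)^{1-α}`, whose integral
over `u ∈ [0, c]` is `Γ(α-1) ((1+c)^{2-α} - 1) / (2-α)`. Finally `Γ(α) = (α-1) Γ(α-1)`.
-/

open MeasureTheory Real Set

/-- The integral is a positive multiple of `Γ(a)`, and a non-integrable function has integral `0`. -/
lemma integrableOn_rpow_mul_exp_neg_mul_Ioi {a b : ℝ} (ha : 0 < a) (hb : 0 < b) :
    IntegrableOn (fun r : ℝ => r ^ (a - 1) * exp (-(b * r))) (Ioi 0) :=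
  Integrable.of_integral_ne_zero <| by
    rw [integral_rpow_mul_exp_neg_mul_Ioi ha hb]
    positivity

lemma integral_exp_neg_mul_Ioc {r c : ℝ} (hr : r ≠ 0) (hc : 0 ≤ c) :
    ∫ u in Ioc 0 c, exp (-(u * r)) = (1 - exp (-(c * r))) / r := by
  have hderiv : ∀ u ∈ uIcc 0 c,
      HasDerivAt (fun u => exp (-(u * r)) / -r) (exp (-(u * r))) u := fun u _ => by
    refine ((((hasDerivAt_id' u).mul_const r).fun_neg.exp).div_const (-r)).congr_deriv ?_
    field_simp
  rw [← intervalIntegral.integral_of_le hc, intervalIntegral.integral_eq_sub_of_hasDerivAt hderiv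
    (Continuous.intervalIntegrable (by fun_prop) _ _)]
  simp only [zero_mul, neg_zero, exp_zero]
  field_simp
  ring

lemma integral_one_add_rpow_neg {s c : ℝ} (hs : s ≠ 1) (hc : -1 < c) :
    ∫ u in 0..c, (1 + u) ^ (-s) = ((1 + c) ^ (1 - s) - 1) / (1 - s) := by
  rw [intervalIntegral.integral_comp_add_left (fun u => u ^ (-s)), add_zero,
    integral_rpow, show -s + 1 = 1 - s by ring, one_rpow]
  refine Or.inr ⟨fun h => hs (by linarith), fun h0 => ?_⟩
  rw [mem_uIcc] at h0
  rcases h0 with h | h <;> linarith [h.1, h.2]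

lemma integral_one_sub_exp_neg_mul_rpow_mul_exp_neg_Ioi {s c : ℝ} (hs : 0 < s) (hc : 0 ≤ c) :
    ∫ r in Ioi 0, (1 - exp (-(c * r))) * (r ^ (s - 2) * exp (-r)) =
      Gamma s * ∫ u in 0..c, (1 + u) ^ (-s) := by
  set F : ℝ × ℝ → ℝ := fun p => p.1 ^ (s - 1) * exp (-((1 + p.2) * p.1)) with hF
  have integral_F_Ioi : ∀ u ∈ Ioc 0 c, ∫ r in Ioi 0, F (r, u) = Gamma s * (1 + u) ^ (-s) := by
    intro u hu
    have h1u : 0 < 1 + u := by linarith [hu.1]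
    rw [integral_rpow_mul_exp_neg_mul_Ioi hs h1u, one_div, inv_rpow h1u.le, ← rpow_neg h1u.le,
      mul_comm]
  have integral_F_Ioc : ∀ r ∈ Ioi 0, ∫ u in Ioc 0 c, F (r, u) =
      (1 - exp (-(c * r))) * (r ^ (s - 2) * exp (-r)) := by
    intro r hr
    have hr : 0 < r := hr
    have hF_split : ∀ u, F (r, u) = r ^ (s - 1) * exp (-r) * exp (-(u * r)) := by
      intro u
      simp only [hF]
      rw [mul_assoc, ← exp_add]
      ring_nf
    simp only [hF_split]
    rw [integral_const_mul, integral_exp_neg_mul_Ioc hr.ne' hc,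
      show s - 1 = s - 2 + 1 by ring, rpow_add_one hr.ne']
    field_simp
  have hF_int : Integrable F ((volume.restrict (Ioi 0)).prod (volume.restrict (Ioc 0 c))) := by
    rw [integrable_prod_iff' (by fun_prop : Measurable F).aestronglyMeasurable]
    constructor
    · filter_upwards [ae_restrict_mem measurableSet_Ioc] with u hu
      exact integrableOn_rpow_mul_exp_neg_mul_Ioi (b := 1 + u) hs (by linarith [hu.1])
    · refine IntegrableOn.congr_fun (f := fun u => Gamma s * (1 + u) ^ (-s)) ?_
        (fun u hu => ?_) measurableSet_Ioc
      · refine (ContinuousOn.integrableOn_Icc ?_).mono_set Ioc_subset_Icc_self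
        exact continuousOn_const.mul <| (continuousOn_const.add continuousOn_id).rpow_const
          fun u hu => Or.inl (show 1 + u ≠ 0 by linarith [hu.1])
      · refine (integral_F_Ioi u hu).symm.trans <|
          setIntegral_congr_fun measurableSet_Ioi fun r hr => ?_
        exact (Real.norm_of_nonneg (by have : 0 < r := hr; positivity)).symm
  calc ∫ r in Ioi 0, (1 - exp (-(c * r))) * (r ^ (s - 2) * exp (-r))
      = ∫ r in Ioi 0, ∫ u in Ioc 0 c, F (r, u) :=
        (setIntegral_congr_fun measurableSet_Ioi integral_F_Ioc).symm
    _ = ∫ u in Ioc 0 c, ∫ r in Ioi 0, F (r, u) := integral_integral_swap hF_int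
    _ = ∫ u in Ioc 0 c, Gamma s * (1 + u) ^ (-s) :=
        setIntegral_congr_fun measurableSet_Ioc integral_F_Ioi
    _ = Gamma s * ∫ u in 0..c, (1 + u) ^ (-s) := by
        rw [integral_const_mul, intervalIntegral.integral_of_le hc]

theorem stmt_14 (B t α : ℝ) (hB : B < 0) (ht : 0 < t) (hα : 1 < α) (hα2 : α ≠ 2) :
    ∫ r in Set.Ioi (0 : ℝ),
        ((Real.exp (B * r * t) - 1) / (B ^ 2 * r ^ 2)) *
          (r ^ (α - 1) * Real.exp (-r) / Real.Gamma α) =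
      ((1 - B * t) ^ (2 - α) - 1) / (B ^ 2 * (α - 1) * (α - 2)) := by
  set c := -(B * t) with hc_def
  have hc : 0 ≤ c := neg_nonneg.2 (mul_neg_of_neg_of_pos hB ht).le
  have integrand_eq : ∀ r ∈ Ioi (0 : ℝ),
      (exp (B * r * t) - 1) / (B ^ 2 * r ^ 2) * (r ^ (α - 1) * exp (-r) / Gamma α) =
        -(1 / (B ^ 2 * Gamma α)) * ((1 - exp (-(c * r))) * (r ^ (α - 1 - 2) * exp (-r))) := by
    intro r hr
    have hr : 0 < r := hr
    have hpow : r ^ (α - 1) = r ^ (α - 1 - 2) * r ^ 2 := by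
      rw [← rpow_natCast, ← rpow_add hr]
      norm_num
    rw [hpow, show -(c * r) = B * r * t by rw [hc_def]; ring]
    field_simp
    ring
  have hΓ : Gamma α = (α - 1) * Gamma (α - 1) := by
    simpa using Real.Gamma_add_one (sub_ne_zero.2 hα.ne')
  rw [setIntegral_congr_fun measurableSet_Ioi integrand_eq, integral_const_mul,
    integral_one_sub_exp_neg_mul_rpow_mul_exp_neg_Ioi (by linarith) hc,
    integral_one_add_rpow_neg (fun h => hα2 (by linarith)) (by linarith), hΓ,
    show 1 + c = 1 - B * t by rw [hc_def]; ring, show 1 - (α - 1) = 2 - α by ring]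
  have hΓ_ne : Gamma (α - 1) ≠ 0 := (Gamma_pos_of_pos (by linarith)).ne'
  have hα1_ne : α - 1 ≠ 0 := by linarith
  have hα2_ne : α - 2 ≠ 0 := sub_ne_zero.2 hα2
  field_simp
  ring
end

section
/- Fix t > 0, β, ρ ∈ ℝ, a > 0, b > 0, A < 0 and u ∈ ℝ. Set g = uβ + u²/2 and C = g/A − ρu, and for s ∈ [0,t] set c(s) = u·f_u(A,s) = ((e^{A(t−s)} − 1)/A)·g + ρu. Assume c(s) < b for all s ∈ [0, t] and b + C ≠ 0. Then ∫₀ᵗ ∫₀^∞ (e^{c(s)x} − 1) · a b e^{−bx} dx ds = (a/(A(b + C))) · ( b·ln( (b − ρu) / (b − (e^{At}/A)g + C) ) − A·C·t ). (In particular the inner integral equals a·c(s)/(b − c(s)) for each s.) -/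
/-!
For c < b the inner integral is a difference of two Laplace transforms of the exponential density,
a b (1/(b - c) - 1/b) = a c/(b - c). As a function of s, c(s) solves the linear equation
c' = -A (c + C), so the partial fraction decomposition
c/(b - c) = b/(b + C) · (c + C)/(b - c) - C/(b + C) exhibits the antiderivative
(b/(A (b + C))) log (b - c(s)) - C s/(b + C).
-/

open Real MeasureTheory Set

lemma integral_exp_sub_one_mul_exp_neg_Ioi (a : ℝ) {b c : ℝ} (hb : 0 < b) (hcb : c < b) :
    ∫ x in Ioi (0 : ℝ), (exp (c * x) - 1) * (a * b * exp (-b * x)) = a * c / (b - c) := by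
  have hcb' : c - b < 0 := sub_neg.mpr hcb
  have hb' : -b < 0 := neg_neg_of_pos hb
  have hsplit : ∀ x : ℝ, (exp (c * x) - 1) * (a * b * exp (-b * x)) =
      a * b * (exp ((c - b) * x) - exp (-b * x)) := fun x => by
    rw [show (c - b) * x = c * x + -b * x by ring, exp_add]
    ring
  simp_rw [hsplit]
  rw [integral_const_mul, integral_sub (integrableOn_exp_mul_Ioi hcb' 0)
    (integrableOn_exp_mul_Ioi hb' 0), integral_exp_mul_Ioi hcb', integral_exp_mul_Ioi hb']
  simp only [mul_zero, exp_zero]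
  field_simp [hcb'.ne, hb'.ne, (sub_pos.mpr hcb).ne']
  ring

lemma hasDerivAt_exp_sub_one_div_mul_add {A : ℝ} (hA : A ≠ 0) (t g r s : ℝ) :
    HasDerivAt (fun s => (exp (A * (t - s)) - 1) / A * g + r)
      (-A * ((exp (A * (t - s)) - 1) / A * g + r + (g / A - r))) s := by
  have h :=
    (((((hasDerivAt_id' s).const_sub t).const_mul A).exp.sub_const 1).div_const A).mul_const g
  refine (h.add_const r).congr_deriv ?_
  field_simp
  ring

lemma integral_mul_div_sub_of_hasDerivAt {c : ℝ → ℝ} {A C p q : ℝ} (a b : ℝ) (hA : A ≠ 0)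
    (hbC : b + C ≠ 0) (hc : ∀ s ∈ uIcc p q, HasDerivAt c (-A * (c s + C)) s)
    (hcb : ∀ s ∈ uIcc p q, c s < b) :
    ∫ s in p..q, a * c s / (b - c s) =
      a / (A * (b + C)) * (b * log ((b - c q) / (b - c p)) - A * C * (q - p)) := by
  have hpos : ∀ s ∈ uIcc p q, b - c s ≠ 0 := fun s hs => (sub_pos.mpr (hcb s hs)).ne'
  have hF : ∀ s ∈ uIcc p q, HasDerivAt
      (fun s => a / (A * (b + C)) * (b * log (b - c s) - A * C * s)) (a * c s / (b - c s)) s := by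
    intro s hs
    have h := ((((hc s hs).const_sub b).log (hpos s hs)).const_mul b |>.sub
      ((hasDerivAt_id' s).const_mul (A * C))).const_mul (a / (A * (b + C)))
    refine h.congr_deriv ?_
    field_simp [hpos s hs]
    ring
  have hcont : ContinuousOn c (uIcc p q) := fun s hs => (hc s hs).continuousAt.continuousWithinAt
  have hint : IntervalIntegrable (fun s => a * c s / (b - c s)) volume p q :=
    ((continuousOn_const.mul hcont).div (continuousOn_const.sub hcont) hpos).intervalIntegrable
  rw [intervalIntegral.integral_eq_sub_of_hasDerivAt hF hint,
    log_div (hpos q right_mem_uIcc) (hpos p left_mem_uIcc)]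
  ring

theorem stmt_16_general (t β ρ a b A u : ℝ) (ht : 0 < t) (hb : 0 < b) (hA : A < 0)
    (hc : ∀ s ∈ Set.Icc (0 : ℝ) t,
      ((Real.exp (A * (t - s)) - 1) / A) * (u * β + u ^ 2 / 2) + ρ * u < b)
    (hbC : b + ((u * β + u ^ 2 / 2) / A - ρ * u) ≠ 0) :
    (∫ s in (0 : ℝ)..t, ∫ x in Set.Ioi (0 : ℝ),
        (Real.exp ((((Real.exp (A * (t - s)) - 1) / A) * (u * β + u ^ 2 / 2) + ρ * u) * x) - 1) *
          (a * b * Real.exp (-b * x))) =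
      (a / (A * (b + ((u * β + u ^ 2 / 2) / A - ρ * u)))) *
        (b * Real.log ((b - ρ * u) /
            (b - (Real.exp (A * t) / A) * (u * β + u ^ 2 / 2) +
              ((u * β + u ^ 2 / 2) / A - ρ * u))) -
          A * ((u * β + u ^ 2 / 2) / A - ρ * u) * t) ∧
    ∀ s ∈ Set.Icc (0 : ℝ) t,
      (∫ x in Set.Ioi (0 : ℝ),
          (Real.exp ((((Real.exp (A * (t - s)) - 1) / A) * (u * β + u ^ 2 / 2) + ρ * u) * x) - 1) *
            (a * b * Real.exp (-b * x))) =
        a * (((Real.exp (A * (t - s)) - 1) / A) * (u * β + u ^ 2 / 2) + ρ * u) /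
          (b - (((Real.exp (A * (t - s)) - 1) / A) * (u * β + u ^ 2 / 2) + ρ * u)) := by
  have hA0 : A ≠ 0 := hA.ne
  have hinner := fun s (hs : s ∈ Icc 0 t) => integral_exp_sub_one_mul_exp_neg_Ioi a hb (hc s hs)
  refine ⟨?_, hinner⟩
  rw [← uIcc_of_le ht.le] at hinner hc
  rw [intervalIntegral.integral_congr hinner, integral_mul_div_sub_of_hasDerivAt a b hA0 hbC
    (fun s _ => hasDerivAt_exp_sub_one_div_mul_add hA0 t _ _ s) hc]
  simp only [sub_zero, sub_self, mul_zero, exp_zero]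
  congr 4; ring

theorem stmt_16 (t β ρ a b A u : ℝ) (ht : 0 < t) (ha : 0 < a) (hb : 0 < b) (hA : A < 0)
    (hc : ∀ s ∈ Set.Icc (0 : ℝ) t,
      ((Real.exp (A * (t - s)) - 1) / A) * (u * β + u ^ 2 / 2) + ρ * u < b)
    (hbC : b + ((u * β + u ^ 2 / 2) / A - ρ * u) ≠ 0) :
    (∫ s in (0 : ℝ)..t, ∫ x in Set.Ioi (0 : ℝ),
        (Real.exp ((((Real.exp (A * (t - s)) - 1) / A) * (u * β + u ^ 2 / 2) + ρ * u) * x) - 1) *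
          (a * b * Real.exp (-b * x))) =
      (a / (A * (b + ((u * β + u ^ 2 / 2) / A - ρ * u)))) *
        (b * Real.log ((b - ρ * u) /
            (b - (Real.exp (A * t) / A) * (u * β + u ^ 2 / 2) +
              ((u * β + u ^ 2 / 2) / A - ρ * u))) -
          A * ((u * β + u ^ 2 / 2) / A - ρ * u) * t) ∧
    ∀ s ∈ Set.Icc (0 : ℝ) t,
      (∫ x in Set.Ioi (0 : ℝ),
          (Real.exp ((((Real.exp (A * (t - s)) - 1) / A) * (u * β + u ^ 2 / 2) + ρ * u) * x) - 1) *
            (a * b * Real.exp (-b * x))) =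
        a * (((Real.exp (A * (t - s)) - 1) / A) * (u * β + u ^ 2 / 2) + ρ * u) /
          (b - (((Real.exp (A * (t - s)) - 1) / A) * (u * β + u ^ 2 / 2) + ρ * u)) :=
  stmt_16_general t β ρ a b A u ht hb hA hc hbC
end
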